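/- There is no directed path in the pair-digraph H+ joining a vertex of one non-trivial strongly connected component to a vertex of a different non-trivial strongly connected component. -/

import Mathlib

variable {V : Type*}

/-- Arc of the pair-digraph H⁺: from (u,v) to (u',v) when u,v have the same color,
uu' is an edge and vu' is a non-edge; from (u,v) to (u,v') when u,v have different
colors, vv' is an edge and uv is a non-edge.  Vertices of H⁺ are pairs of distinct
vertices of H. -/
def PDArc (G : SimpleGraph V) (c : V → Bool) (p q : V × V) : Prop :=
  p.1 ≠ p.2 ∧ q.1 ≠ q.2 ∧
    ((c p.1 = c p.2 ∧ q.2 = p.2 ∧ G.Adj p.1 q.1 ∧ ¬ G.Adj p.2 q.1) ∨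
     (c p.1 ≠ c p.2 ∧ q.1 = p.1 ∧ G.Adj p.2 q.2 ∧ ¬ G.Adj p.1 p.2))

/-- Reachability by directed paths in the pair-digraph. -/
def PDReach (G : SimpleGraph V) (c : V → Bool) : V × V → V × V → Prop :=
  Relation.ReflTransGen (PDArc G c)

/-- `S` is a strongly connected component of the pair-digraph. -/
def PDSCC (G : SimpleGraph V) (c : V → Bool) (S : Set (V × V)) : Prop :=
  S.Nonempty ∧ ∀ p ∈ S, ∀ q, q ∈ S ↔ (PDReach G c p q ∧ PDReach G c q p)

/-- A non-trivial strongly connected component (more than one vertex). -/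
def PDSCCNontriv (G : SimpleGraph V) (c : V → Bool) (S : Set (V × V)) : Prop :=
  PDSCC G c S ∧ ∃ p ∈ S, ∃ q ∈ S, p ≠ q

/-- The coupled set S' = {(u,v) : (v,u) ∈ S}. -/
def PDCoupled (S : Set (V × V)) : Set (V × V) := {p | (p.2, p.1) ∈ S}

/-- A linear ordering avoids the forbidden patterns: there are no a < b < x with
a, b in the same color class, x in the opposite one, ax an edge and bx a non-edge. -/
def GoodOrder (G : SimpleGraph V) (c : V → Bool) (r : LinearOrder V) : Prop :=
  ∀ a b x : V, r.lt a b → r.lt b x → c a = c b → c a ≠ c x → G.Adj a x → G.Adj b x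

/-- `ab` and `xy` are independent edges: the four vertices are distinct and induce
exactly the two edges `ab` and `xy`. -/
def IndepEdges (G : SimpleGraph V) (a b x y : V) : Prop :=
  a ≠ b ∧ a ≠ x ∧ a ≠ y ∧ b ≠ x ∧ b ≠ y ∧ x ≠ y ∧
    G.Adj a b ∧ G.Adj x y ∧ ¬ G.Adj a x ∧ ¬ G.Adj a y ∧ ¬ G.Adj b x ∧ ¬ G.Adj b y


/-!
In a bipartite graph the arcs of H⁺ alternate between monochromatic and bichromatic pairs.
This forces every arc `r → q`, where `r` has an in-arc and `q` an out-arc, onto a directed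
4-cycle of H⁺ built from those arcs' endpoints. Vertices of non-trivial strong components
have in- and out-arcs, so walking back along a path from one such vertex to another reverses
it arc by arc: the two endpoints lie in the same strong component.
-/

lemma Bool.eq_of_ne_of_ne {a b d : Bool} (ha : a ≠ d) (hb : b ≠ d) : a = b :=
  (Bool.eq_not_iff.2 ha).trans (Bool.eq_not_iff.2 hb).symm

variable {G : SimpleGraph V} {c : V → Bool} {p q : V × V}

namespace PDArc

variable {u v u' v' : V}

lemma move_fst (huv : u ≠ v) (hu'v : u' ≠ v) (hc : c u = c v) (hadj : G.Adj u u')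
    (hnadj : ¬ G.Adj v u') : PDArc G c (u, v) (u', v) :=
  ⟨huv, hu'v, .inl ⟨hc, rfl, hadj, hnadj⟩⟩

lemma move_snd (huv : u ≠ v) (huv' : u ≠ v') (hc : c u ≠ c v) (hadj : G.Adj v v')
    (hnadj : ¬ G.Adj u v) : PDArc G c (u, v) (u, v') :=
  ⟨huv, huv', .inr ⟨hc, rfl, hadj, hnadj⟩⟩

lemma of_color_eq (h : PDArc G c p q) (hc : c p.1 = c p.2) :
    q.2 = p.2 ∧ G.Adj p.1 q.1 ∧ ¬ G.Adj p.2 q.1 := by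
  obtain ⟨-, -, ⟨-, h⟩ | ⟨hc', -⟩⟩ := h
  exacts [h, absurd hc hc']

lemma of_color_ne (h : PDArc G c p q) (hc : c p.1 ≠ c p.2) :
    q.1 = p.1 ∧ G.Adj p.2 q.2 ∧ ¬ G.Adj p.1 p.2 := by
  obtain ⟨-, -, ⟨hc', -⟩ | ⟨-, h⟩⟩ := h
  exacts [absurd hc' hc, h]

lemma color_eq_iff (hbip : ∀ x y : V, G.Adj x y → c x ≠ c y) (h : PDArc G c p q) :
    c q.1 = c q.2 ↔ c p.1 ≠ c p.2 := by
  obtain ⟨-, -, ⟨hc, h2, hadj, -⟩ | ⟨hc, h1, hadj, -⟩⟩ := h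
  · have := hbip _ _ hadj
    rw [h2]; revert this hc; cases c p.1 <;> cases c p.2 <;> cases c q.1 <;> simp
  · have := hbip _ _ hadj
    rw [h1]; revert this hc; cases c p.1 <;> cases c p.2 <;> cases c q.2 <;> simp

lemma reach_reverse (hbip : ∀ x y : V, G.Adj x y → c x ≠ c y) {r s t : V × V}
    (h : PDArc G c r q) (hin : PDArc G c s r) (hout : PDArc G c q t) : PDReach G c q r := by
  obtain ⟨u₀, v₀⟩ := r
  obtain ⟨u, v⟩ := q
  obtain ⟨hr, hq, ⟨hc, rfl : v = v₀, hadj, hnadj⟩ | ⟨hc, rfl : u = u₀, hadj, hnadj⟩⟩ := h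
  · -- the cycle `(u, v) → (u, v₁) → (u₀, v₁) = s → (u₀, v)`
    obtain ⟨hs₁, hs_adj, hs_nadj⟩ := hin.of_color_ne ((hin.color_eq_iff hbip).1 hc)
    obtain ⟨s₁, v₁⟩ := s
    obtain rfl : s₁ = u₀ := hs₁.symm
    have hcu : c u ≠ c v := fun h => hbip _ _ hadj (hc.trans h.symm)
    have huv₁ : u ≠ v₁ := by rintro rfl; exact hnadj hs_adj.symm
    exact .head (move_snd hq huv₁ hcu hs_adj.symm fun h => hnadj h.symm)
      (.head (move_fst huv₁ hin.1 (Bool.eq_of_ne_of_ne hcu (hbip _ _ hs_adj)) hadj.symm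
        fun h => hs_nadj h.symm) (.single hin))
  · -- the cycle `(u, v) → (u₂, v) = t → (u₂, v₀) → (u, v₀)`
    have hcq : c u = c v := Bool.eq_of_ne_of_ne hc (hbip _ _ hadj).symm
    obtain ⟨ht₂, ht_adj, ht_nadj⟩ := hout.of_color_eq hcq
    obtain ⟨u₂, t₂⟩ := t
    obtain rfl : t₂ = v := ht₂
    have hcu₂ : c u₂ ≠ c u := (hbip _ _ ht_adj).symm
    have hu₂v₀ : u₂ ≠ v₀ := by rintro rfl; exact hnadj ht_adj
    exact .head hout (.head (move_snd hout.2.1 hu₂v₀ (hcq ▸ hcu₂) hadj.symm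
      fun h => ht_nadj h.symm) (.single (move_fst hu₂v₀ hr
        (Bool.eq_of_ne_of_ne hcu₂ hc.symm) ht_adj.symm fun h => hnadj h.symm)))

end PDArc

lemma PDReach.reverse (hbip : ∀ x y : V, G.Adj x y → c x ≠ c y) (h : PDReach G c p q)
    (hin : ∃ s, PDArc G c s p) (hout : ∃ t, PDArc G c q t) : PDReach G c q p := by
  induction h with
  | refl => exact .refl
  | @tail b r hpb hbr ih =>
    obtain ⟨s, hs⟩ : ∃ s, PDArc G c s b := by
      rcases hpb.cases_tail with rfl | ⟨s, -, hs⟩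
      exacts [hin, ⟨s, hs⟩]
    obtain ⟨t, ht⟩ := hout
    exact (hbr.reach_reverse hbip hs ht).trans (ih ⟨r, hbr⟩)

lemma PDSCC.eq_of_mem {S T : Set (V × V)} (hS : PDSCC G c S) (hT : PDSCC G c T)
    (hqS : q ∈ S) (hqT : q ∈ T) : S = T := by
  ext r
  rw [hS.2 q hqS r, hT.2 q hqT r]

namespace PDSCCNontriv

variable {S : Set (V × V)}

lemma exists_ne_mem (hS : PDSCCNontriv G c S) (p : V × V) : ∃ x ∈ S, x ≠ p := by
  obtain ⟨-, a, ha, b, hb, hab⟩ := hS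
  by_cases hap : a = p
  · exact ⟨b, hb, fun hbp => hab (hap.trans hbp.symm)⟩
  · exact ⟨a, ha, hap⟩

lemma exists_arc_out (hS : PDSCCNontriv G c S) (hp : p ∈ S) : ∃ t, PDArc G c p t := by
  obtain ⟨x, hx, hxp⟩ := hS.exists_ne_mem p
  rcases ((hS.1.2 p hp x).1 hx).1.cases_head with rfl | ⟨t, ht, -⟩
  exacts [absurd rfl hxp, ⟨t, ht⟩]

lemma exists_arc_into (hS : PDSCCNontriv G c S) (hp : p ∈ S) : ∃ s, PDArc G c s p := by
  obtain ⟨x, hx, hxp⟩ := hS.exists_ne_mem p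
  rcases ((hS.1.2 p hp x).1 hx).2.cases_tail with rfl | ⟨s, -, hs⟩
  exacts [absurd rfl hxp, ⟨s, hs⟩]

end PDSCCNontriv

/-- There is no directed path in H⁺ from one non-trivial strongly connected
component to a different non-trivial strongly connected component. -/
theorem stmt13 (G : SimpleGraph V) (c : V → Bool)
    (hbip : ∀ x y : V, G.Adj x y → c x ≠ c y)
    (S T : Set (V × V)) (hS : PDSCCNontriv G c S) (hT : PDSCCNontriv G c T)
    (hST : S ≠ T) (p q : V × V) (hp : p ∈ S) (hq : q ∈ T) :
    ¬ PDReach G c p q := by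
  intro hpq
  have hqp : PDReach G c q p := hpq.reverse hbip (hS.exists_arc_into hp) (hT.exists_arc_out hq)
  have hqS : q ∈ S := (hS.1.2 p hp q).2 ⟨hpq, hqp⟩
  exact hST (hS.1.eq_of_mem hT.1 hqS hq)
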